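/- For every n ≥ 3 and d ≥ 2, the Rook's Walk and the RWBD chain have identical distance-to-stationarity profiles: for every t ≥ 0, max_{x ∈ Ω} ‖P^t(x,·) − π‖_TV = max_{s ∈ {0,…,d}} ‖P*^t(s,·) − π*‖_TV. Consequently, for every ε ∈ (0,1) the mixing times of the two chains are equal. -/

import Mathlib

open Finset

noncomputable section

/-- Total variation distance between two distributions on a finite set. -/
def tv {S : Type*} [Fintype S] (μ ν : S → ℝ) : ℝ :=
  (∑ s, |μ s - ν s|) / 2

/-- The state space of the Rook's Walk: a `d`-dimensional board of side length `n`. -/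
abbrev RW.State (n d : ℕ) : Type := Fin d → Fin n

/-- The transition matrix of the Rook's Walk on `{1,…,n}^d`. -/
def RW.P (n d : ℕ) : Matrix (RW.State n d) (RW.State n d) ℝ :=
  Matrix.of fun x y =>
    if hammingDist x y = 1 then 1 / ((d : ℝ) * ((n : ℝ) - 1)) else 0

/-- The (uniform) stationary distribution of the Rook's Walk. -/
def RW.pi (n d : ℕ) : RW.State n d → ℝ := fun _ => 1 / (n : ℝ) ^ d

/-- Worst-case total variation distance to stationarity at time `t`. -/
def RW.dist (n d : ℕ) (t : ℕ) : ℝ :=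
  ⨆ x : RW.State n d, tv ((RW.P n d ^ t) x) (RW.pi n d)

/-- The mixing time of the Rook's Walk. -/
def RW.tmix (n d : ℕ) (ε : ℝ) : ℕ := sInf {t : ℕ | RW.dist n d t ≤ ε}

/-- The transition matrix of the Rook's Walk Birth-Death (RWBD) chain on `{0,…,d}`. -/
def BD.P (n d : ℕ) : Matrix (Fin (d + 1)) (Fin (d + 1)) ℝ :=
  Matrix.of fun x y =>
    if (y : ℕ) + 1 = (x : ℕ) then (x : ℝ) / ((d : ℝ) * ((n : ℝ) - 1))
    else if (y : ℕ) = (x : ℕ) then (x : ℝ) * ((n : ℝ) - 2) / ((d : ℝ) * ((n : ℝ) - 1))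
    else if (y : ℕ) = (x : ℕ) + 1 then ((d : ℝ) - (x : ℝ)) / (d : ℝ)
    else 0

/-- The stationary distribution of the RWBD chain: `π*(x) = C(d,x)(n-1)^x n^{-d}`. -/
def BD.pi (n d : ℕ) : Fin (d + 1) → ℝ :=
  fun x => (d.choose (x : ℕ) : ℝ) * ((n : ℝ) - 1) ^ (x : ℕ) / (n : ℝ) ^ d

/-- Worst-case total variation distance to stationarity of the RWBD chain at time `t`. -/
def BD.dist (n d : ℕ) (t : ℕ) : ℝ :=
  ⨆ x : Fin (d + 1), tv ((BD.P n d ^ t) x) (BD.pi n d)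

/-- The mixing time of the RWBD chain. -/
def BD.tmix (n d : ℕ) (ε : ℝ) : ℕ := sInf {t : ℕ | BD.dist n d t ≤ ε}

/-!
Counting nonzero coordinates, `RW.weight`, lumps the Rook's Walk onto the RWBD chain: from a state
of weight `w` the walk enters the set of states of weight `k` with probability `P*(w, k)`, and the
uniform distribution lumps to `π*`. Lumping cannot increase total variation, so every row of
`P*^t` is at most as far from `π*` as some row of `P^t` is from `π`. Conversely, the Rook's Walk
commutes with translations of `(ℤ/n)^d`, so all rows of `P^t` are equally far from `π`; and
`P^t(0, ·)`, like `π`, is constant on weight classes, where lumping preserves total variation.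
Hence both worst-case distances equal `‖P*^t(0, ·) - π*‖_TV`.
-/

open Function

section Lumping

variable {α β : Type*} [Fintype α] [DecidableEq β]

def fiberSum (f : α → β) (μ : α → ℝ) (b : β) : ℝ := ∑ a with f a = b, μ a

lemma fiberSum_comp (f : α → β) (g : β → ℝ) (b : β) :
    fiberSum f (g ∘ f) b = #{a | f a = b} * g b := by
  rw [fiberSum, ← nsmul_eq_mul, ← sum_const]
  exact sum_congr rfl fun a ha => by rw [comp_apply, (mem_filter.mp ha).2]

variable [Fintype β]

lemma sum_mul_comp_eq_sum_fiberSum_mul (f : α → β) (μ : α → ℝ) (g : β → ℝ) :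
    ∑ a, μ a * g (f a) = ∑ b, fiberSum f μ b * g b := by
  rw [← sum_fiberwise univ f]
  refine sum_congr rfl fun b _ => ?_
  rw [fiberSum, sum_mul]
  exact sum_congr rfl fun a ha => by rw [(mem_filter.mp ha).2]

lemma tv_fiberSum_le (f : α → β) (μ ν : α → ℝ) :
    tv (fiberSum f μ) (fiberSum f ν) ≤ tv μ ν := by
  unfold tv
  gcongr ?_ / 2
  calc ∑ b, |fiberSum f μ b - fiberSum f ν b|
      = ∑ b, |∑ a with f a = b, (μ a - ν a)| := by simp only [fiberSum, sum_sub_distrib]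
    _ ≤ ∑ b, ∑ a with f a = b, |μ a - ν a| := sum_le_sum fun b _ => abs_sum_le_sum_abs _ _
    _ = ∑ a, |μ a - ν a| := sum_fiberwise univ f _

lemma tv_fiberSum_comp (f : α → β) (g h : β → ℝ) :
    tv (fiberSum f (g ∘ f)) (fiberSum f (h ∘ f)) = tv (g ∘ f) (h ∘ f) := by
  unfold tv
  rw [← sum_fiberwise univ f]
  congr 1
  refine sum_congr rfl fun b _ => ?_
  rw [fiberSum_comp, fiberSum_comp, ← mul_sub, abs_mul, Nat.abs_cast, ← nsmul_eq_mul, ← sum_const]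
  exact sum_congr rfl fun a ha => by simp only [comp_apply, (mem_filter.mp ha).2]

def IsLumping (f : α → β) (P : Matrix α α ℝ) (Q : Matrix β β ℝ) : Prop :=
  ∀ x, fiberSum f (P x) = Q (f x)

variable [DecidableEq α] {f : α → β} {P : Matrix α α ℝ} {Q : Matrix β β ℝ}

lemma IsLumping.pow (h : IsLumping f P Q) (t : ℕ) : IsLumping f (P ^ t) (Q ^ t) := by
  induction t with
  | zero =>
    intro x
    ext b
    simp [fiberSum, Matrix.one_apply]
  | succ t ih =>
    intro x
    ext b
    calc fiberSum f ((P ^ t * P) x) b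
        = ∑ w, (P ^ t) x w * fiberSum f (P w) b := by
          simp only [fiberSum, Matrix.mul_apply, mul_sum]
          exact sum_comm
      _ = ∑ c, (Q ^ t) (f x) c * Q c b := by
          simp only [h _, ← ih x]
          exact sum_mul_comp_eq_sum_fiberSum_mul f _ (Q · b)
      _ = (Q ^ (t + 1)) (f x) b := by rw [pow_succ, Matrix.mul_apply]

lemma IsLumping.exists_pow_apply_eq_comp (h : IsLumping f P Q) (hP : P.IsSymm) {x : α}
    (hx : ∀ y, f y = f x → y = x) (t : ℕ) : ∃ g : β → ℝ, (P ^ t) x = g ∘ f := by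
  induction t with
  | zero =>
    refine ⟨fun b => if f x = b then 1 else 0, funext fun y => ?_⟩
    have : x = y ↔ f x = f y := ⟨congrArg f, fun hxy => (hx y hxy.symm).symm⟩
    simp only [pow_zero, Matrix.one_apply, comp_apply, this]
  | succ t ih =>
    -- symmetry turns `P^(t+1) x y` into a sum over the row `P y`, which lumps to `Q (f y)`
    obtain ⟨g, hg⟩ := ih
    refine ⟨fun c => ∑ b, Q c b * g b, funext fun y => ?_⟩
    calc (P ^ (t + 1)) x y = ∑ w, P y w * g (f w) := by
          simp only [pow_succ, Matrix.mul_apply, hg, comp_apply, mul_comm, hP.apply y]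
      _ = ∑ b, Q (f y) b * g b := by rw [sum_mul_comp_eq_sum_fiberSum_mul, h y]

end Lumping

section Translation

variable {G : Type*} [AddGroup G] [Fintype G] [DecidableEq G] {P : Matrix G G ℝ}

lemma Matrix.pow_apply_add_add (hP : ∀ x a b, P (x + a) (x + b) = P a b) (t : ℕ) (x a b : G) :
    (P ^ t) (x + a) (x + b) = (P ^ t) a b := by
  induction t generalizing b with
  | zero => simp only [pow_zero, Matrix.one_apply, add_right_inj]
  | succ t ih =>
    simp only [pow_succ, Matrix.mul_apply]
    rw [← Equiv.sum_comp (Equiv.addLeft x)]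
    simp only [Equiv.coe_addLeft, ih, hP]

lemma tv_pow_apply_const_eq_apply_zero (hP : ∀ x a b, P (x + a) (x + b) = P a b) (t : ℕ)
    (x : G) (c : ℝ) :
    tv ((P ^ t) x) (fun _ => c) = tv ((P ^ t) 0) (fun _ => c) := by
  unfold tv
  rw [← Equiv.sum_comp (Equiv.addLeft x)]
  simp only [Equiv.coe_addLeft, ← Matrix.pow_apply_add_add hP t x 0, add_zero]

variable {β : Type*} [Fintype β] [DecidableEq β] {Q : Matrix β β ℝ} {f : G → β}

theorem iSup_tv_pow_eq_of_isLumping (hlump : IsLumping f P Q) (hf : Surjective f)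
    (hsymm : P.IsSymm) (hP : ∀ x a b, P (x + a) (x + b) = P a b) (hf0 : ∀ y, f y = f 0 → y = 0)
    (c : ℝ) (t : ℕ) :
    ⨆ x, tv ((P ^ t) x) (fun _ => c) = ⨆ b, tv ((Q ^ t) b) (fiberSum f fun _ => c) := by
  obtain ⟨g, hg⟩ := hlump.exists_pow_apply_eq_comp hsymm hf0 t
  have hP0 : ∀ x, tv ((P ^ t) x) (fun _ => c) = tv ((Q ^ t) (f 0)) (fiberSum f fun _ => c) := by
    intro x
    rw [tv_pow_apply_const_eq_apply_zero hP, ← hlump.pow t 0, hg]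
    exact (tv_fiberSum_comp f g fun _ => c).symm
  have hQ : ∀ b, tv ((Q ^ t) b) (fiberSum f fun _ => c) ≤
      tv ((Q ^ t) (f 0)) (fiberSum f fun _ => c) := by
    intro b
    obtain ⟨x, rfl⟩ := hf b
    rw [← hlump.pow t x, ← hP0 x]
    exact tv_fiberSum_le f _ _
  have : Nonempty β := ⟨f 0⟩
  simp only [hP0, ciSup_const]
  refine le_antisymm ?_ (ciSup_le hQ)
  exact le_ciSup (f := fun b => tv ((Q ^ t) b) (fiberSum f fun _ => c)) (Finite.bddAbove_range _) _

end Translation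

section Hamming

variable {ι β : Type*} [Fintype ι] [DecidableEq ι] [DecidableEq β]

lemma hammingDist_update_eq_one {y : ι → β} {i : ι} {v : β} (hv : v ≠ y i) :
    hammingDist y (update y i v) = 1 := by
  refine card_eq_one.mpr ⟨i, ext fun j => ?_⟩
  by_cases hj : j = i
  · subst hj; simp [hv.symm]
  · simp [hj]

lemma exists_eq_update_of_hammingDist_eq_one {y z : ι → β} (h : hammingDist y z = 1) :
    ∃ i, z i ≠ y i ∧ z = update y i (z i) := by
  obtain ⟨i, hi⟩ := card_eq_one.mp h
  have hdiff : ∀ j, y j ≠ z j ↔ j = i := fun j => by simpa using congrArg (j ∈ ·) hi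
  refine ⟨i, fun h => (hdiff i).mpr rfl h.symm, funext fun j => ?_⟩
  by_cases hj : j = i
  · subst hj; simp
  · simpa [hj, eq_comm] using (hdiff j).not.mpr hj

lemma hammingNorm_update_add [Zero β] (y : ι → β) (i : ι) (v : β) :
    hammingNorm (update y i v) + (if y i ≠ 0 then 1 else 0) =
      hammingNorm y + (if v ≠ 0 then 1 else 0) := by
  let c : β → ℕ := fun b => if b ≠ 0 then 1 else 0
  have hsum : ∀ x : ι → β, hammingNorm x = ∑ j, c (x j) := fun x => card_filter _ _
  have hupd := sum_update_of_mem (mem_univ i) (fun j => c (y j)) (c v)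
  have hsplit := sum_eq_add_sum_sdiff_singleton_of_mem (mem_univ i) (fun j => c (y j))
  simp only [← apply_update (fun _ => c)] at hupd
  rw [hsum, hsum]
  change _ + c (y i) = _ + c v
  omega

variable [Fintype β]

lemma sum_hammingDist_eq_one {M : Type*} [AddCommMonoid M] (y : ι → β) (φ : (ι → β) → M) :
    ∑ z with hammingDist y z = 1, φ z = ∑ i, ∑ v ∈ univ.erase (y i), φ (update y i v) := by
  rw [sum_sigma']
  symm
  refine sum_bij (fun p _ => update y p.1 p.2) (fun p hp => ?_) (fun p hp q hq hpq => ?_)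
    (fun z hz => ?_) (fun _ _ => rfl)
  · simpa using hammingDist_update_eq_one (mem_erase.mp (mem_sigma.mp hp).2).1
  · obtain ⟨i, v⟩ := p
    obtain ⟨j, w⟩ := q
    have hv : v ≠ y i := (mem_erase.mp (mem_sigma.mp hp).2).1
    obtain rfl : i = j := by
      by_contra hij
      exact hv (by simpa [update_of_ne hij] using congrFun hpq i)
    simpa using congrFun hpq i
  · obtain ⟨i, hi, hz⟩ := exists_eq_update_of_hammingDist_eq_one (mem_filter.mp hz).2
    exact ⟨⟨i, z i⟩, by simpa using hi, hz.symm⟩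

variable [Zero β]

lemma sum_hammingDist_eq_one_comp_hammingNorm {M : Type*} [AddCommMonoid M]
    (y : ι → β) (g : ℕ → M) :
    ∑ z with hammingDist y z = 1, g (hammingNorm z) =
      (Fintype.card ι - hammingNorm y) • (Fintype.card β - 1) • g (hammingNorm y + 1) +
        hammingNorm y • (g (hammingNorm y - 1) + (Fintype.card β - 2) • g (hammingNorm y)) := by
  set w := hammingNorm y
  have inner : ∀ i, ∑ v ∈ univ.erase (y i), g (hammingNorm (update y i v)) =
      if y i = 0 then (Fintype.card β - 1) • g (w + 1)
      else g (w - 1) + (Fintype.card β - 2) • g w := by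
    intro i
    have hupd := hammingNorm_update_add y i
    split_ifs with hyi
    · rw [← card_univ, ← card_erase_of_mem (mem_univ (y i)), ← sum_const]
      refine sum_congr rfl fun v hv => congrArg g ?_
      have := hupd v
      simp [hyi, hyi ▸ ne_of_mem_erase hv] at this
      omega
    · have h0 : (0 : β) ∈ univ.erase (y i) := mem_erase.mpr ⟨Ne.symm hyi, mem_univ 0⟩
      have hcard : #((univ.erase (y i)).erase 0) = Fintype.card β - 2 := by
        rw [card_erase_of_mem h0, card_erase_of_mem (mem_univ _), card_univ]; rfl
      rw [← add_sum_erase _ _ h0, ← hcard, ← sum_const]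
      congr 1
      · have := hupd 0
        simp [hyi] at this
        exact congrArg g (by omega)
      · refine sum_congr rfl fun v hv => congrArg g ?_
        have := hupd v
        simp [hyi, ne_of_mem_erase hv] at this
        omega
  rw [sum_hammingDist_eq_one, sum_congr rfl fun i _ => inner i, sum_ite, sum_const, sum_const]
  congr 2
  have := card_filter_add_card_filter_not (s := univ) (fun i => y i = 0)
  rw [card_univ] at this
  change _ + w = _ at this
  omega

lemma card_hammingNorm_eq (k : ℕ) :
    #{z : ι → β | hammingNorm z = k} = (Fintype.card ι).choose k * (Fintype.card β - 1) ^ k := by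
  have hmaps : ((({z | hammingNorm z = k} : Finset (ι → β))) : Set (ι → β)).MapsTo
      (fun z => ({i | z i ≠ 0} : Finset ι)) (powersetCard k (univ : Finset ι)) :=
    fun z hz => by simpa [hammingNorm] using hz
  rw [card_eq_sum_card_fiberwise hmaps, ← card_univ, ← card_powersetCard, ← smul_eq_mul,
    ← sum_const]
  refine sum_congr rfl fun s hs => ?_
  have hfiber :
      {z ∈ ({z | hammingNorm z = k} : Finset (ι → β)) | ({i | z i ≠ 0} : Finset ι) = s} =
        Fintype.piFinset fun i => {b | b ≠ 0 ↔ i ∈ s} := by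
    ext z
    simp only [mem_filter, mem_univ, true_and, Fintype.mem_piFinset, Finset.ext_iff]
    refine ⟨fun h => h.2, fun h => ⟨?_, h⟩⟩
    rw [← (mem_powersetCard.mp hs).2, hammingNorm]
    exact congrArg card (Finset.ext fun i => by simpa using h i)
  have hcoord : ∀ i,
      #({b | b ≠ 0 ↔ i ∈ s} : Finset β) = if i ∈ s then Fintype.card β - 1 else 1 := by
    intro i
    split_ifs with hi
    · simp [hi, filter_ne', card_erase_of_mem]
    · simp [hi, filter_eq']
  rw [hfiber, Fintype.card_piFinset, prod_congr rfl fun i _ => hcoord i, prod_ite_mem, univ_inter,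
    prod_const, (mem_powersetCard.mp hs).2]

end Hamming

namespace RW

variable {n d : ℕ}

lemma P_isSymm : (P n d).IsSymm :=
  Matrix.IsSymm.ext fun x y => by simp only [P, Matrix.of_apply, hammingDist_comm]

lemma P_add_add (x a b : State n d) : P n d (x + a) (x + b) = P n d a b := by
  simp only [P, Matrix.of_apply]
  congr 2
  exact hammingDist_comp (fun i => (x i + ·)) fun i => add_right_injective (x i)

variable [NeZero n]

def weight (z : State n d) : Fin (d + 1) :=
  ⟨hammingNorm z, Nat.lt_succ_of_le (hammingNorm_le_card_fintype.trans_eq (Fintype.card_fin d))⟩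

lemma eq_zero_of_weight_eq (z : State n d) (h : weight z = weight (0 : State n d)) : z = 0 := by
  simpa [weight, Fin.ext_iff] using h

lemma card_weight_eq (k : Fin (d + 1)) :
    #{z : State n d | weight z = k} = d.choose k * (n - 1) ^ (k : ℕ) := by
  simp only [weight, Fin.ext_iff]
  rw [card_hammingNorm_eq, Fintype.card_fin, Fintype.card_fin]

lemma weight_surjective (hn : 2 ≤ n) : Surjective (weight : State n d → Fin (d + 1)) := by
  intro k
  have hpos : 0 < #{z : State n d | weight z = k} := by
    rw [card_weight_eq]
    exact Nat.mul_pos (Nat.choose_pos (Nat.lt_succ_iff.mp k.isLt)) (pow_pos (by omega) _)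
  obtain ⟨z, hz⟩ := card_pos.mp hpos
  exact ⟨z, (mem_filter.mp hz).2⟩

lemma fiberSum_weight_pi : fiberSum weight (pi n d) = BD.pi n d := by
  ext k
  change fiberSum weight ((fun _ => 1 / (n : ℝ) ^ d) ∘ weight) k = _
  rw [fiberSum_comp, card_weight_eq, BD.pi]
  push_cast [Nat.cast_sub NeZero.one_le]
  ring

lemma isLumping_weight (hn : 2 ≤ n) : IsLumping weight (P n d) (BD.P n d) := by
  intro y
  ext k
  let g : ℕ → ℝ := fun j => if j = k then 1 / ((d : ℝ) * ((n : ℝ) - 1)) else 0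
  have hsum : fiberSum weight (P n d y) k = ∑ z with hammingDist y z = 1, g (hammingNorm z) := by
    simp only [fiberSum, P, Matrix.of_apply, sum_filter, weight, Fin.ext_iff, g]
    refine sum_congr rfl fun z _ => ?_
    split_ifs <;> simp_all
  rw [hsum, sum_hammingDist_eq_one_comp_hammingNorm]
  have hw : hammingNorm y ≤ d := Nat.lt_succ_iff.mp (weight y).isLt
  simp only [Fintype.card_fin, BD.P, Matrix.of_apply, weight, g]
  have hn1 : (n : ℝ) - 1 ≠ 0 := sub_ne_zero.mpr (by exact_mod_cast (by omega : n ≠ 1))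
  generalize hammingNorm y = w at hw ⊢
  obtain ⟨k, hk⟩ := k
  rcases Nat.eq_zero_or_pos d with rfl | hd
  · obtain rfl : w = 0 := by omega
    obtain rfl : k = 0 := by omega
    simp
  have hd' : (d : ℝ) ≠ 0 := by positivity
  simp only [nsmul_eq_mul]
  push_cast [Nat.cast_sub hw, Nat.cast_sub (by omega : 1 ≤ n), Nat.cast_sub hn]
  -- splitting off `w = 0` keeps the truncated `w - 1` from matching `k`
  rcases w with _ | w <;> split_ifs <;> first | omega | contradiction | (field_simp; ring)

end RW

theorem rook_walk_rwbd_same_profile_general (n d : ℕ) (hn : 3 ≤ n) :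
    (∀ t : ℕ, RW.dist n d t = BD.dist n d t) ∧
    (∀ ε : ℝ, 0 < ε → ε < 1 → RW.tmix n d ε = BD.tmix n d ε) := by
  have : NeZero n := ⟨by omega⟩
  have hprofile : ∀ t, RW.dist n d t = BD.dist n d t := fun t => by
    rw [RW.dist, BD.dist, ← RW.fiberSum_weight_pi]
    exact iSup_tv_pow_eq_of_isLumping (G := RW.State n d) (RW.isLumping_weight (by omega))
      (RW.weight_surjective (by omega)) RW.P_isSymm RW.P_add_add RW.eq_zero_of_weight_eq _ t
  exact ⟨hprofile, fun ε _ _ => by simp only [RW.tmix, BD.tmix, hprofile]⟩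

/-- The Rook's Walk and the RWBD chain have identical distance-to-stationarity profiles,
and hence equal mixing times. -/
theorem rook_walk_rwbd_same_profile (n d : ℕ) (hn : 3 ≤ n) (hd : 2 ≤ d) :
    (∀ t : ℕ, RW.dist n d t = BD.dist n d t) ∧
    (∀ ε : ℝ, 0 < ε → ε < 1 → RW.tmix n d ε = BD.tmix n d ε) :=
  rook_walk_rwbd_same_profile_general n d hn
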